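/- If m ≡ 1 (mod 4) and n is even, then the necklace count N(n,m) is odd. -/

import Mathlib

/-- The cyclic left shift on `Fin n → α`: `(x_1,…,x_n) ↦ (x_2,…,x_n,x_1)`. -/
def cycShift {α : Type*} {n : ℕ} (x : Fin n → α) : Fin n → α :=
  fun i => if h : (i : ℕ) + 1 < n then x ⟨(i : ℕ) + 1, h⟩
           else x ⟨0, Nat.lt_of_le_of_lt (Nat.zero_le _) i.isLt⟩

/-!
Necklaces are the orbits of the cyclic group `Fin n` acting on words `Fin n → A` by translation.
Burnside's lemma for this action gives `N * n = ∑_{d ∣ n} φ(d) m^(n/d)`, and since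
`∑_{d ∣ n} φ(d) = n` this reads `n (N - 1) = ∑_{d ∣ n} φ(d) (m^(n/d) - 1)`. If `2^a ∥ n`, every
term is divisible by `2^(a+1)`: lifting the exponent at `2` gives `2^(v₂(n/d)+2) ∣ m^(n/d) - 1`
because `m ≡ 1 (mod 4)`, while `2^(v₂(d)-1) ∣ φ(d)`. Hence `N - 1` is even.
-/

open Function
open scoped Nat

theorem Int.two_pow_add_two_dvd_pow_sub_one {m : ℤ} (hm : 4 ∣ m - 1) {j d : ℕ}
    (hd : 2 ^ j ∣ d) : 2 ^ (j + 2) ∣ m ^ d - 1 := by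
  have hm_odd : ¬ 2 ∣ m := by omega
  have h4 : (2 : ℕ∞) ≤ emultiplicity 2 (m - 1) := le_emultiplicity_of_pow_dvd (by simpa using hm)
  have hj : (j : ℕ∞) ≤ emultiplicity (2 : ℤ) d := le_emultiplicity_of_pow_dvd (by exact_mod_cast hd)
  rw [pow_dvd_iff_le_emultiplicity, ← one_pow d, Int.two_pow_sub_pow' d (by simpa) hm_odd]
  push_cast
  exact add_comm (j : ℕ∞) 2 ▸ add_le_add h4 hj

theorem Nat.pow_pred_dvd_totient {p b k : ℕ} (hp : p.Prime) (h : p ^ b ∣ k) :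
    p ^ (b - 1) ∣ φ k := by
  rcases b with _ | b
  · simp
  · exact (totient_prime_pow_succ hp b ▸ dvd_mul_right _ _).trans (totient_dvd_of_dvd h)

theorem two_pow_succ_dvd_totient_mul_pow_sub_one {m : ℤ} (hm : 4 ∣ m - 1) {a d e : ℕ}
    (h : 2 ^ a ∣ d * e) : (2 : ℤ) ^ (a + 1) ∣ φ d * (m ^ e - 1) := by
  obtain ⟨_, _, hd, he, hsplit⟩ := Nat.dvd_mul.mp h
  obtain ⟨b, -, rfl⟩ := (Nat.dvd_prime_pow Nat.prime_two).mp (hsplit ▸ dvd_mul_right _ _)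
  obtain ⟨c, -, rfl⟩ := (Nat.dvd_prime_pow Nat.prime_two).mp (hsplit ▸ dvd_mul_left _ _)
  have hbc : b + c = a := Nat.pow_right_injective le_rfl ((pow_add 2 b c).trans hsplit)
  have hprod := mul_dvd_mul (Int.natCast_dvd_natCast.mpr (Nat.pow_pred_dvd_totient Nat.prime_two hd))
    (Int.two_pow_add_two_dvd_pow_sub_one hm he)
  push_cast [← pow_add] at hprod
  exact (pow_dvd_pow 2 (by omega)).trans hprod

theorem odd_of_mul_eq_sum_totient_mul_pow {m n N : ℕ} (hm : m % 4 = 1) (hn : n ≠ 0)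
    (h : N * n = ∑ d ∈ n.divisors, φ d * m ^ (n / d)) : Odd N := by
  have hsum : (n : ℤ) * (N - 1) = ∑ d ∈ n.divisors, (φ d : ℤ) * ((m : ℤ) ^ (n / d) - 1) := by
    have h' := congrArg (Nat.cast : ℕ → ℤ) h
    push_cast at h'
    rw [mul_sub, mul_one, mul_comm, h']
    simp only [mul_sub, mul_one, Finset.sum_sub_distrib]
    congr 1
    exact_mod_cast (Nat.sum_totient n).symm
  obtain ⟨a, q, hq, hnq⟩ := Nat.exists_eq_two_pow_mul_odd hn
  have hdvd : (2 : ℤ) ^ (a + 1) ∣ n * (N - 1) := by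
    rw [hsum]
    refine Finset.dvd_sum fun d hd => two_pow_succ_dvd_totient_mul_pow_sub_one (by omega) ?_
    rw [Nat.mul_div_cancel' (Nat.dvd_of_mem_divisors hd), hnq]
    exact dvd_mul_right _ _
  have h2 : (2 : ℤ) ∣ q * (N - 1) := by
    rwa [hnq, pow_succ, Nat.cast_mul, mul_assoc, Nat.cast_pow, Nat.cast_ofNat,
      mul_dvd_mul_iff_left (by positivity)] at hdvd
  simpa [Int.even_mul, parity_simps, Nat.not_even_iff_odd.mpr hq] using even_iff_two_dvd.mpr h2

section Translation

variable {G A : Type*} [AddCommGroup G]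

def Function.subtypePeriodicEquiv (g : G) :
    {f : G → A // Periodic f g} ≃ (G ⧸ AddSubgroup.zmultiples g → A) where
  toFun f := f.2.lift
  invFun F := ⟨fun a => F a, fun a => by simp⟩
  left_inv _ := rfl
  right_inv F := by
    funext q
    induction q using QuotientAddGroup.induction_on
    rfl

theorem Function.card_subtype_periodic [Finite G] (g : G) :
    Nat.card {f : G → A // Periodic f g} = Nat.card A ^ (Nat.card G / addOrderOf g) := by
  rw [Nat.card_congr (subtypePeriodicEquiv g), Nat.card_fun, ← AddSubgroup.index,
    ← (AddSubgroup.zmultiples g).index_mul_card, Nat.card_zmultiples,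
    Nat.mul_div_cancel _ (addOrderOf_pos g)]

theorem DomAddAct.mem_fixedBy_mk_iff (g : G) (f : G → A) :
    f ∈ AddAction.fixedBy (G → A) (mk g) ↔ Periodic f g := by
  simp [funext_iff, vadd_apply, Periodic, add_comm]

theorem card_orbits_domAddAct_mul_card [Fintype G] [Finite A] :
    Nat.card (AddAction.orbitRel.Quotient Gᵈᵃᵃ (G → A)) * Nat.card G =
      ∑ g : G, Nat.card A ^ (Nat.card G / addOrderOf g) := by
  classical
  have := Fintype.ofFinite A
  let := Fintype.ofEquiv G DomAddAct.mk
  have burnside := AddAction.sum_card_fixedBy_eq_card_orbits_mul_card_addGroup Gᵈᵃᵃ (G → A)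
  simp only [← Nat.card_eq_fintype_card, Nat.card_congr DomAddAct.mk.symm] at burnside
  rw [← burnside]
  refine (Fintype.sum_equiv DomAddAct.mk _ _ fun g => ?_).symm
  rw [← card_subtype_periodic]
  exact Nat.card_congr (Equiv.subtypeEquivRight fun f => (DomAddAct.mem_fixedBy_mk_iff g f).symm)

theorem IsAddCyclic.sum_addOrderOf [Fintype G] [IsAddCyclic G] {M : Type*} [AddCommMonoid M]
    (F : ℕ → M) : ∑ g : G, F (addOrderOf g) = ∑ d ∈ (Fintype.card G).divisors, φ d • F d := by
  classical
  rw [← Finset.sum_fiberwise_of_maps_to (g := addOrderOf) (t := (Fintype.card G).divisors)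
    fun g _ => Nat.mem_divisors.2 ⟨addOrderOf_dvd_card, Fintype.card_ne_zero⟩]
  refine Finset.sum_congr rfl fun d hd => ?_
  rw [Finset.sum_congr rfl fun g hg => by rw [(Finset.mem_filter.1 hg).2], Finset.sum_const,
    IsAddCyclic.card_addOrderOf_eq_totient (Nat.dvd_of_mem_divisors hd)]

theorem IsAddCyclic.card_orbits_domAddAct_mul_card [Fintype G] [IsAddCyclic G] [Finite A] :
    Nat.card (AddAction.orbitRel.Quotient Gᵈᵃᵃ (G → A)) * Nat.card G =
      ∑ d ∈ (Nat.card G).divisors, φ d * Nat.card A ^ (Nat.card G / d) := by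
  rw [_root_.card_orbits_domAddAct_mul_card,
    IsAddCyclic.sum_addOrderOf (fun d => Nat.card A ^ (Nat.card G / d)), ← Nat.card_eq_fintype_card]
  simp only [smul_eq_mul]

end Translation

section Rotation

open Fin.NatCast

variable {n : ℕ} [NeZero n] {A : Type*}

instance : IsAddCyclic (Fin n) := ⟨⟨1, fun k => ⟨k.val, by simp⟩⟩⟩

theorem cycShift_apply (x : Fin n → A) (i : Fin n) : cycShift x i = x (i + 1) := by
  obtain ⟨n, rfl⟩ := Nat.exists_eq_succ_of_ne_zero (NeZero.ne n)
  have h_last : i = Fin.last n ↔ ¬ (i : ℕ) + 1 < n + 1 := by rw [Fin.ext_iff, Fin.val_last]; omega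
  unfold cycShift
  split_ifs with h <;> congr 1 <;> ext <;> simp [Fin.val_add_one, h_last, h]

theorem pow_apply_eq_mk_vadd {s : Equiv.Perm (Fin n → A)} (hs : ∀ x, s x = cycShift x) (k : ℕ)
    (x : Fin n → A) : (s ^ k) x = DomAddAct.mk (k : Fin n) +ᵥ x := by
  induction k generalizing x with
  | zero => ext i; simp [DomAddAct.vadd_apply]
  | succ k ih =>
    ext i
    rw [pow_succ, Equiv.Perm.mul_apply, ih, DomAddAct.vadd_apply, DomAddAct.vadd_apply, hs,
      cycShift_apply]
    simp [add_comm, add_assoc]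

theorem orbitRel_zpowers_eq_orbitRel_domAddAct [Finite A] {s : Equiv.Perm (Fin n → A)}
    (hs : ∀ x, s x = cycShift x) :
    MulAction.orbitRel (Subgroup.zpowers s) (Fin n → A) =
      AddAction.orbitRel (Fin n)ᵈᵃᵃ (Fin n → A) := by
  refine Setoid.ext fun x y => ?_
  rw [MulAction.orbitRel_apply, AddAction.orbitRel_apply, MulAction.mem_orbit_iff,
    AddAction.mem_orbit_iff]
  constructor
  · rintro ⟨⟨g, hg⟩, rfl⟩
    obtain ⟨k, rfl⟩ := mem_powers_iff_mem_zpowers.mpr hg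
    exact ⟨_, (pow_apply_eq_mk_vadd hs k y).symm⟩
  · rintro ⟨c, rfl⟩
    refine ⟨⟨s ^ (DomAddAct.mk.symm c).val, pow_mem (Subgroup.mem_zpowers s) _⟩, ?_⟩
    simp [Subgroup.smul_def, pow_apply_eq_mk_vadd hs]

end Rotation

theorem necklace_count_odd_general (m n : ℕ) (hm : m % 4 = 1) (hn0 : 0 < n)
    (A : Type) [Fintype A] (hA : Fintype.card A = m)
    (s : Equiv.Perm (Fin n → A)) (hs : ∀ x, s x = cycShift x) :
    Odd (Nat.card (MulAction.orbitRel.Quotient (Subgroup.zpowers s) (Fin n → A))) := by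
  have : NeZero n := ⟨hn0.ne'⟩
  have burnside := IsAddCyclic.card_orbits_domAddAct_mul_card (G := Fin n) (A := A)
  rw [Nat.card_eq_fintype_card (α := A), hA, Nat.card_fin] at burnside
  refine odd_of_mul_eq_sum_totient_mul_pow hm hn0.ne' ?_
  unfold MulAction.orbitRel.Quotient
  rwa [orbitRel_zpowers_eq_orbitRel_domAddAct hs]

/-- if `m ≡ 1 (mod 4)` and `n` is even, then the necklace count
`N(n,m)` (the number of orbits of cyclic rotation on `Σ^n`) is odd. -/
theorem necklace_count_odd (m n : ℕ) (hm : m % 4 = 1) (hn : Even n) (hn0 : 0 < n)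
    (A : Type) [Fintype A] [DecidableEq A] (hA : Fintype.card A = m)
    (s : Equiv.Perm (Fin n → A)) (hs : ∀ x, s x = cycShift x) :
    Odd (Nat.card (MulAction.orbitRel.Quotient (Subgroup.zpowers s) (Fin n → A))) :=
  necklace_count_odd_general m n hm hn0 A hA s hs
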